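/- arXiv:2104.06570 — 2 statements merged into one kernel-verified Lean document; each statement's English description precedes it below -/
import Mathlib

section
/- Let 𝔽_{q^m} be a degree-m field extension of 𝔽_q, let Ψ: 𝔽_{q^m}^n → 𝔽_q^{n×m} be the entrywise coordinate-map isomorphism with respect to a fixed 𝔽_q-basis of 𝔽_{q^m}, let G ∈ 𝔽_{q^m}^{k×n} have 𝔽_{q^m}-rank k, and let ρ be the column rank function of Ψ(rowsp_{𝔽_{q^m}}(G)), so that M_G = (𝔽_q^n, ρ) is a q-matroid. Let B = {v₁, …, v_n} be a basis of 𝔽_q^n and define r(A) = ρ(⟨A⟩) for A ⊆ B. Set X = (v₁, …, v_n) ∈ GL_n(𝔽_q) and G' = GX, with columns of G' indexed by v₁, …, v_n. Then r(A) = rk_{𝔽_{q^m}}(G'_A) for every A ⊆ B, where G'_A is the submatrix of G' of columns indexed by A; in particular the matroid (B, r) is representable over 𝔽_{q^m}. -/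
open Module

/-- The submodule of `n × m` matrices whose column space is contained in `V`. -/
def colspLE {F : Type} [Field F] {n m : ℕ} (V : Submodule F (Fin n → F)) :
    Submodule F (Matrix (Fin n) (Fin m) F) where
  carrier := {M | ∀ x : Fin m → F, M.mulVec x ∈ V}
  add_mem' := by
    intro M N hM hN x
    rw [Set.mem_setOf_eq] at *
    rw [Matrix.add_mulVec]
    exact V.add_mem (hM x) (hN x)
  zero_mem' := by
    intro x
    simp only [Set.mem_setOf_eq, Matrix.zero_mulVec]
    exact V.zero_mem
  smul_mem' := by
    intro c M hM x
    rw [Set.mem_setOf_eq] at *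
    rw [Matrix.smul_mulVec]
    exact V.smul_mem c (hM x)

/-- The shortening `C(V, c) = {M ∈ C : colsp(M) ⊆ V}`. -/
def codeC {F : Type} [Field F] {n m : ℕ} (C : Submodule F (Matrix (Fin n) (Fin m) F))
    (V : Submodule F (Fin n → F)) : Submodule F (Matrix (Fin n) (Fin m) F) :=
  C ⊓ colspLE V

/-- The orthogonal of `V ≤ 𝔽^n` with respect to the standard dot product. -/
def dotPerp {F : Type} [Field F] {n : ℕ} (V : Submodule F (Fin n → F)) :
    Submodule F (Fin n → F) where
  carrier := {w | ∀ v ∈ V, dotProduct v w = 0}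
  add_mem' := by
    intro a b ha hb v hv
    rw [dotProduct_add, ha v hv, hb v hv, add_zero]
  zero_mem' := by
    intro v hv
    simp
  smul_mem' := by
    intro c a ha v hv
    rw [dotProduct_smul, ha v hv, smul_zero]

/-- The column rank function `ρ_c(V) = (dim C − dim C(V^⊥, c))/m` of a rank-metric code. -/
noncomputable def rhoC {F : Type} [Field F] {n m : ℕ}
    (C : Submodule F (Matrix (Fin n) (Fin m) F)) (V : Submodule F (Fin n → F)) : ℚ :=
  ((Module.finrank F C : ℚ) - (Module.finrank F (codeC C (dotPerp V)) : ℚ)) / m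

/-! Write `C = Ψ(W)` with `W` the row space of `G`, and let `Y` be the matrix whose columns are
the vectors of `A`, so that they span `V = ⟨A⟩`. A matrix `Ψ(x)` has column space in `V^⊥` iff
`v Ψ(x) = 0` for every column `v` of `Y`, i.e. iff `x Y = 0`; hence `C(V^⊥, c) = Ψ(W ∩ ker Y)`.
As `Ψ` is injective and `𝔽_q`-linear while `W` is an `𝔽_{q^m}`-space, every `𝔽_q`-dimension here
is `m` times the corresponding `𝔽_{q^m}`-dimension, so by rank–nullity on `W`,
`ρ(V) = dim W − dim (W ∩ ker Y) = dim (W Y) = rk (G Y) = rk (G'_A)`. -/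

theorem mem_colspLE_dotPerp_span_iff {F : Type} [Field F] {n m : ℕ} (s : Set (Fin n → F))
    (M : Matrix (Fin n) (Fin m) F) :
    M ∈ colspLE (dotPerp (Submodule.span F s)) ↔ ∀ v ∈ s, Matrix.vecMul v M = 0 := by
  constructor
  · intro h v hv
    funext j
    simpa only [Matrix.dotProduct_mulVec, dotProduct_single_one, Pi.zero_apply] using
      h (Pi.single j 1) v (Submodule.subset_span hv)
  · intro h x v hv
    have hker : Submodule.span F s ≤ LinearMap.ker M.vecMulLinear :=
      Submodule.span_le.2 fun w hw => h w hw
    rw [Matrix.dotProduct_mulVec, show Matrix.vecMul v M = 0 from hker hv, zero_dotProduct]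

theorem finrank_inf_ker_add_finrank_map {K V V₂ : Type*} [Field K] [AddCommGroup V] [Module K V]
    [AddCommGroup V₂] [Module K V₂] [FiniteDimensional K V] (W : Submodule K V)
    (f : V →ₗ[K] V₂) :
    finrank K ↥(W ⊓ LinearMap.ker f) + finrank K (W.map f) = finrank K W := by
  rw [← LinearMap.range_domRestrict, ← Submodule.map_comap_subtype,
    Submodule.finrank_map_subtype_eq, ← LinearMap.ker_domRestrict, add_comm]
  exact LinearMap.finrank_range_add_finrank_ker _

theorem finrank_map_restrictScalars_of_injective {F K V M : Type*} [Field F] [Field K]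
    [Algebra F K] [AddCommGroup V] [Module K V] [Module F V] [IsScalarTower F K V]
    [AddCommGroup M] [Module F M] [FiniteDimensional F K] [FiniteDimensional K V]
    {f : V →ₗ[F] M} (hf : Function.Injective f) (W : Submodule K V) :
    finrank F (Submodule.map f (W.restrictScalars F)) = finrank F K * finrank K W := by
  rw [← (Submodule.equivMapOfInjective f hf _).finrank_eq]
  exact (Module.finrank_mul_finrank F K W).symm

theorem Matrix.finrank_map_range_vecMulLinear {K ι κ μ : Type*} [Field K] [Fintype ι]
    [Fintype κ] [Fintype μ] (M : Matrix ι κ K) (N : Matrix κ μ K) :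
    finrank K ((LinearMap.range M.vecMulLinear).map N.vecMulLinear) = (M * N).rank := by
  have hcomp : N.vecMulLinear ∘ₗ M.vecMulLinear = (M * N).vecMulLinear := by
    ext x : 1
    simp [Matrix.vecMul_vecMul]
  rw [← LinearMap.range_comp, hcomp, Matrix.rank_eq_finrank_span_row, range_vecMulLinear]

section CoordinateMap

variable {F K : Type} [Field F] [Field K] [Algebra F K] {m n : ℕ} {b : Basis (Fin m) F K}
  {Psi : (Fin n → K) →ₗ[F] Matrix (Fin n) (Fin m) F}

theorem injective_of_apply_eq_repr (hPsi : ∀ x i j, Psi x i j = b.repr (x i) j) :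
    Function.Injective Psi := by
  intro x y hxy
  funext i
  apply b.repr.injective
  ext j
  simpa only [hPsi] using congrFun (congrFun hxy i) j

theorem vecMul_apply_eq_repr_sum (hPsi : ∀ x i j, Psi x i j = b.repr (x i) j)
    (v : Fin n → F) (x : Fin n → K) :
    Matrix.vecMul v (Psi x) = ⇑(b.repr (∑ l, v l • x l)) := by
  funext j
  simp [Matrix.vecMul, dotProduct, hPsi, map_sum]

theorem vecMul_map_algebraMap_apply {ι : Type*} (Y : Matrix (Fin n) ι F) (x : Fin n → K)
    (i : ι) : Matrix.vecMul x (Y.map (algebraMap F K)) i = ∑ l, Y l i • x l := by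
  simp only [Matrix.vecMul, dotProduct, Matrix.map_apply, Algebra.smul_def, mul_comm]

theorem mem_colspLE_dotPerp_span_col_iff (hPsi : ∀ x i j, Psi x i j = b.repr (x i) j)
    {ι : Type*} (Y : Matrix (Fin n) ι F) (x : Fin n → K) :
    Psi x ∈ colspLE (dotPerp (Submodule.span F (Set.range Y.col))) ↔
      Matrix.vecMul x (Y.map (algebraMap F K)) = 0 := by
  rw [mem_colspLE_dotPerp_span_iff, Set.forall_mem_range, funext_iff]
  simp only [vecMul_apply_eq_repr_sum hPsi, vecMul_map_algebraMap_apply, Finsupp.coe_eq_zero,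
    map_eq_zero_iff _ b.repr.injective, Matrix.col_apply, Pi.zero_apply]

theorem codeC_map_restrictScalars_span_col (hPsi : ∀ x i j, Psi x i j = b.repr (x i) j)
    (W : Submodule K (Fin n → K)) {ι : Type*} (Y : Matrix (Fin n) ι F) :
    codeC (Submodule.map Psi (W.restrictScalars F)) (dotPerp (Submodule.span F (Set.range Y.col)))
      = Submodule.map Psi
          ((W ⊓ LinearMap.ker (Y.map (algebraMap F K)).vecMulLinear).restrictScalars F) := by
  ext M
  constructor
  · rintro ⟨⟨x, hx, rfl⟩, hcol⟩
    exact ⟨x, ⟨hx, (mem_colspLE_dotPerp_span_col_iff hPsi Y x).1 hcol⟩, rfl⟩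
  · rintro ⟨x, ⟨hx, hker⟩, rfl⟩
    exact ⟨⟨x, hx, rfl⟩, (mem_colspLE_dotPerp_span_col_iff hPsi Y x).2 hker⟩

theorem rhoC_map_restrictScalars_span_col (hPsi : ∀ x i j, Psi x i j = b.repr (x i) j)
    (W : Submodule K (Fin n → K)) {ι : Type*} [Fintype ι] (Y : Matrix (Fin n) ι F) :
    rhoC (Submodule.map Psi (W.restrictScalars F)) (Submodule.span F (Set.range Y.col))
      = finrank K (W.map (Y.map (algebraMap F K)).vecMulLinear) := by
  have : FiniteDimensional F K := b.finiteDimensional_of_finite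
  have hm : finrank F K = m := by rw [finrank_eq_card_basis b, Fintype.card_fin]
  have hm0 : (m : ℚ) ≠ 0 := by rw [← hm]; exact_mod_cast finrank_pos.ne'
  have hPsi_inj := injective_of_apply_eq_repr hPsi
  have hdim := finrank_inf_ker_add_finrank_map W (Y.map (algebraMap F K)).vecMulLinear
  rw [rhoC, codeC_map_restrictScalars_span_col hPsi,
    finrank_map_restrictScalars_of_injective hPsi_inj,
    finrank_map_restrictScalars_of_injective hPsi_inj, hm, ← hdim]
  field_simp
  push_cast
  ring

end CoordinateMap

theorem induced_matroid_representable_general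
    {F K : Type} [Field F] [Field K] [Algebra F K]
    {m n k : ℕ}
    (b : Basis (Fin m) F K)
    (Psi : (Fin n → K) →ₗ[F] Matrix (Fin n) (Fin m) F)
    (hPsi : ∀ (x : Fin n → K) (i : Fin n) (j : Fin m), Psi x i j = b.repr (x i) j)
    (G : Matrix (Fin k) (Fin n) K)
    (ρ : Submodule F (Fin n → F) → ℚ)
    (hρ : ∀ V : Submodule F (Fin n → F),
      ρ V = rhoC (Submodule.map Psi ((LinearMap.range G.vecMulLinear).restrictScalars F)) V)
    (B : Basis (Fin n) F (Fin n → F))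
    (r : Finset (Fin n) → ℚ)
    (hr : ∀ A : Finset (Fin n), r A = ρ (Submodule.span F (⇑B '' ↑A)))
    (X : Matrix (Fin n) (Fin n) F)
    (hX : ∀ i j : Fin n, X i j = B j i)
    (G' : Matrix (Fin k) (Fin n) K)
    (hG' : G' = G * X.map (algebraMap F K)) :
    ∀ A : Finset (Fin n),
      r A = ((G'.submatrix id (fun a : {x : Fin n // x ∈ A} => (a : Fin n))).rank : ℚ) := by
  intro A
  set XA := X.submatrix id (fun a : {x : Fin n // x ∈ A} => (a : Fin n))
  have hspan : ⇑B '' ↑A = Set.range XA.col := by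
    rw [Set.image_eq_range]
    congr 1
    funext a l
    exact (hX l a).symm
  have hG'A : G'.submatrix id (fun a : {x : Fin n // x ∈ A} => (a : Fin n))
      = G * XA.map (algebraMap F K) := by
    rw [hG']
    rfl
  rw [hr, hρ, hspan, rhoC_map_restrictScalars_span_col hPsi, hG'A,
    Matrix.finrank_map_range_vecMulLinear]

/-- Let `ρ` be the column rank function of `Ψ(rowsp_{𝔽_{q^m}}(G))` for a
full-rank `G ∈ 𝔽_{q^m}^{k×n}`, let `B = {v₁,…,vₙ}` be a basis of `𝔽_q^n`, `r(A) = ρ(⟨A⟩)`,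
`X = (v₁,…,vₙ)` and `G' = GX`. Then `r(A) = rk_{𝔽_{q^m}}(G'_A)` for every `A ⊆ B`;
in particular the induced matroid `(B, r)` is representable over `𝔽_{q^m}`. -/
theorem induced_matroid_representable
    {F K : Type} [Field F] [Fintype F] [Field K] [Algebra F K]
    {m n k : ℕ}
    (b : Basis (Fin m) F K)
    (Psi : (Fin n → K) →ₗ[F] Matrix (Fin n) (Fin m) F)
    (hPsi : ∀ (x : Fin n → K) (i : Fin n) (j : Fin m), Psi x i j = b.repr (x i) j)
    (G : Matrix (Fin k) (Fin n) K)
    (hG : G.rank = k)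
    (ρ : Submodule F (Fin n → F) → ℚ)
    (hρ : ∀ V : Submodule F (Fin n → F),
      ρ V = rhoC (Submodule.map Psi ((LinearMap.range G.vecMulLinear).restrictScalars F)) V)
    (B : Basis (Fin n) F (Fin n → F))
    (r : Finset (Fin n) → ℚ)
    (hr : ∀ A : Finset (Fin n), r A = ρ (Submodule.span F (⇑B '' ↑A)))
    (X : Matrix (Fin n) (Fin n) F)
    (hX : ∀ i j : Fin n, X i j = B j i)
    (G' : Matrix (Fin k) (Fin n) K)
    (hG' : G' = G * X.map (algebraMap F K)) :
    ∀ A : Finset (Fin n),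
      r A = ((G'.submatrix id (fun a : {x : Fin n // x ∈ A} => (a : Fin n))).rank : ℚ) :=
  induced_matroid_representable_general b Psi hPsi G ρ hρ B r hr X hX G' hG'
end

section
/- Let n ∈ ℕ, k ∈ {1, …, n}, and let 𝒮 be a collection of k-dimensional subspaces of 𝔽_q^n such that dim(V ∩ W) ≤ k − 2 for all distinct V, W ∈ 𝒮. Define ρ on subspaces of 𝔽_q^n by ρ(V) = k − 1 if V ∈ 𝒮 and ρ(V) = min{dim V, k} otherwise. Then (𝔽_q^n, ρ) is a q-matroid, i.e., ρ satisfies ρ(V) ≤ dim V for all subspaces V, is monotone with respect to inclusion, and satisfies ρ(V+W) + ρ(V∩W) ≤ ρ(V) + ρ(W) for all subspaces V, W. -/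
/-!
The rank function `ρ` is the uniform rank `min (dim V) k`, lowered by one on the `k`-spaces
of `𝒮`. The uniform rank is submodular, and lowering it on `𝒮` can only break submodularity
at a pair `V, W` with `V ∈ 𝒮` and `V, W` incomparable. Then `dim (V ⊓ W) < k < dim (V ⊔ W)`,
so `ρ (V ⊔ W) + ρ (V ⊓ W) = k + dim (V ⊓ W)`, and it suffices that `dim (V ⊓ W) < ρ W`:
for `W ∉ 𝒮` because `V ⊓ W` is a proper subspace of `W` of dimension `< k`, and for
`W ∈ 𝒮` by the intersection condition `dim (V ⊓ W) ≤ k - 2`.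
-/

open Module

section PavingRank

variable {K M : Type*} [DivisionRing K] [AddCommGroup M] [Module K M]

variable (K) in
def IsQMatroidRank (ρ : Submodule K M → ℕ) : Prop :=
  (∀ V, ρ V ≤ finrank K V) ∧ (∀ V W, V ≤ W → ρ V ≤ ρ W) ∧
    ∀ V W, ρ (V ⊔ W) + ρ (V ⊓ W) ≤ ρ V + ρ W

open Classical in
noncomputable def pavingRank (𝒮 : Set (Submodule K M)) (k : ℕ) (V : Submodule K M) : ℕ :=
  if V ∈ 𝒮 then k - 1 else min (finrank K V) k

variable {𝒮 : Set (Submodule K M)} {k : ℕ} {V W : Submodule K M}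

theorem pavingRank_of_mem (hV : V ∈ 𝒮) : pavingRank 𝒮 k V = k - 1 := by
  simp [pavingRank, hV]

theorem pavingRank_of_notMem (hV : V ∉ 𝒮) : pavingRank 𝒮 k V = min (finrank K V) k := by
  simp [pavingRank, hV]

theorem pavingRank_of_finrank_ne (hdim : ∀ V ∈ 𝒮, finrank K V = k) (hV : finrank K V ≠ k) :
    pavingRank 𝒮 k V = min (finrank K V) k :=
  pavingRank_of_notMem fun hmem => hV (hdim V hmem)

theorem pavingRank_le_min (hdim : ∀ V ∈ 𝒮, finrank K V = k) (V : Submodule K M) :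
    pavingRank 𝒮 k V ≤ min (finrank K V) k := by
  by_cases hV : V ∈ 𝒮
  · rw [pavingRank_of_mem hV, hdim V hV]
    omega
  · rw [pavingRank_of_notMem hV]

theorem pavingRank_le_finrank (hdim : ∀ V ∈ 𝒮, finrank K V = k) (V : Submodule K M) :
    pavingRank 𝒮 k V ≤ finrank K V :=
  (pavingRank_le_min hdim V).trans (min_le_left _ _)

variable [FiniteDimensional K M]

theorem min_finrank_sup_add_min_finrank_inf_le (k : ℕ) (V W : Submodule K M) :
    min (finrank K ↥(V ⊔ W)) k + min (finrank K ↥(V ⊓ W)) k ≤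
      min (finrank K V) k + min (finrank K W) k := by
  have hdim := Submodule.finrank_sup_add_finrank_inf_eq V W
  have hV := Submodule.finrank_mono (inf_le_left : V ⊓ W ≤ V)
  have hW := Submodule.finrank_mono (inf_le_right : V ⊓ W ≤ W)
  omega

theorem pavingRank_mono (hdim : ∀ V ∈ 𝒮, finrank K V = k) (hVW : V ≤ W) :
    pavingRank 𝒮 k V ≤ pavingRank 𝒮 k W := by
  by_cases hW : W ∈ 𝒮
  · rcases hVW.eq_or_lt with rfl | hlt
    · rfl
    have hrank := Submodule.finrank_lt_finrank_of_lt hlt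
    rw [hdim W hW] at hrank
    rw [pavingRank_of_finrank_ne hdim hrank.ne, pavingRank_of_mem hW]
    omega
  · rw [pavingRank_of_notMem hW]
    have hV := pavingRank_le_min (k := k) hdim V
    have hmono := Submodule.finrank_mono hVW
    omega

theorem finrank_inf_lt_pavingRank (hdim : ∀ V ∈ 𝒮, finrank K V = k)
    (hint : ∀ V ∈ 𝒮, ∀ W ∈ 𝒮, V ≠ W → finrank K ↥(V ⊓ W) + 2 ≤ k)
    (hV : V ∈ 𝒮) (hVW : ¬V ≤ W) (hWV : ¬W ≤ V) :
    finrank K ↥(V ⊓ W) < pavingRank 𝒮 k W := by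
  by_cases hW : W ∈ 𝒮
  · have := hint V hV W hW fun h => hVW h.le
    rw [pavingRank_of_mem hW]
    omega
  · have hltV := Submodule.finrank_lt_finrank_of_lt <|
      inf_le_left.lt_of_ne (mt inf_eq_left.mp hVW)
    have hltW := Submodule.finrank_lt_finrank_of_lt <|
      inf_le_right.lt_of_ne (mt inf_eq_right.mp hWV)
    rw [hdim V hV] at hltV
    rw [pavingRank_of_notMem hW]
    omega

theorem pavingRank_sup_add_inf_le_of_mem (hdim : ∀ V ∈ 𝒮, finrank K V = k)
    (hint : ∀ V ∈ 𝒮, ∀ W ∈ 𝒮, V ≠ W → finrank K ↥(V ⊓ W) + 2 ≤ k) (hV : V ∈ 𝒮) :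
    pavingRank 𝒮 k (V ⊔ W) + pavingRank 𝒮 k (V ⊓ W) ≤
      pavingRank 𝒮 k V + pavingRank 𝒮 k W := by
  by_cases hVW : V ≤ W
  · rw [sup_eq_right.mpr hVW, inf_eq_left.mpr hVW, add_comm]
  by_cases hWV : W ≤ V
  · rw [sup_eq_left.mpr hWV, inf_eq_right.mpr hWV]
  have hinf := Submodule.finrank_lt_finrank_of_lt <|
    inf_le_left.lt_of_ne (mt inf_eq_left.mp hVW)
  have hsup := Submodule.finrank_lt_finrank_of_lt <|
    le_sup_left.lt_of_ne fun h => hWV (sup_eq_left.mp h.symm)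
  have hkey := finrank_inf_lt_pavingRank hdim hint hV hVW hWV
  rw [hdim V hV] at hinf hsup
  rw [pavingRank_of_finrank_ne hdim hsup.ne', pavingRank_of_finrank_ne hdim hinf.ne,
    pavingRank_of_mem hV]
  omega

theorem pavingRank_sup_add_inf_le (hdim : ∀ V ∈ 𝒮, finrank K V = k)
    (hint : ∀ V ∈ 𝒮, ∀ W ∈ 𝒮, V ≠ W → finrank K ↥(V ⊓ W) + 2 ≤ k) (V W : Submodule K M) :
    pavingRank 𝒮 k (V ⊔ W) + pavingRank 𝒮 k (V ⊓ W) ≤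
      pavingRank 𝒮 k V + pavingRank 𝒮 k W := by
  by_cases hV : V ∈ 𝒮
  · exact pavingRank_sup_add_inf_le_of_mem hdim hint hV
  by_cases hW : W ∈ 𝒮
  · rw [sup_comm, inf_comm, add_comm (pavingRank 𝒮 k V)]
    exact pavingRank_sup_add_inf_le_of_mem hdim hint hW
  rw [pavingRank_of_notMem hV, pavingRank_of_notMem hW]
  exact (add_le_add (pavingRank_le_min hdim _) (pavingRank_le_min hdim _)).trans
    (min_finrank_sup_add_min_finrank_inf_le k V W)

theorem isQMatroidRank_pavingRank (hdim : ∀ V ∈ 𝒮, finrank K V = k)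
    (hint : ∀ V ∈ 𝒮, ∀ W ∈ 𝒮, V ≠ W → finrank K ↥(V ⊓ W) + 2 ≤ k) :
    IsQMatroidRank K (pavingRank 𝒮 k) :=
  ⟨pavingRank_le_finrank hdim, fun _ _ => pavingRank_mono hdim,
    pavingRank_sup_add_inf_le hdim hint⟩

end PavingRank

theorem paving_qMatroid_rank_function_general
    {F : Type} [Field F] {n k : ℕ}
    (𝒮 : Set (Submodule F (Fin n → F)))
    (h𝒮dim : ∀ V ∈ 𝒮, finrank F V = k)
    (h𝒮int : ∀ V ∈ 𝒮, ∀ W ∈ 𝒮, V ≠ W → ((finrank F ↥(V ⊓ W)) : ℤ) ≤ (k : ℤ) - 2)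
    (ρ : Submodule F (Fin n → F) → ℕ)
    (hρ𝒮 : ∀ V ∈ 𝒮, ρ V = k - 1)
    (hρ : ∀ (V : Submodule F (Fin n → F)), V ∉ 𝒮 → ρ V = min (finrank F V) k) :
    (∀ V : Submodule F (Fin n → F), ρ V ≤ finrank F V) ∧
    (∀ V W : Submodule F (Fin n → F), V ≤ W → ρ V ≤ ρ W) ∧
    (∀ V W : Submodule F (Fin n → F), ρ (V ⊔ W) + ρ (V ⊓ W) ≤ ρ V + ρ W) := by
  have hρ_eq : ρ = pavingRank 𝒮 k := by
    funext V
    by_cases hV : V ∈ 𝒮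
    · rw [hρ𝒮 V hV, pavingRank_of_mem hV]
    · rw [hρ V hV, pavingRank_of_notMem hV]
  have hint : ∀ V ∈ 𝒮, ∀ W ∈ 𝒮, V ≠ W → finrank F ↥(V ⊓ W) + 2 ≤ k :=
    fun V hV W hW hVW => by have := h𝒮int V hV W hW hVW; omega
  exact hρ_eq ▸ isQMatroidRank_pavingRank h𝒮dim hint

/-- Let `k ∈ {1,…,n}` and `𝒮` a collection of `k`-dimensional subspaces
of `𝔽_q^n` with pairwise intersections of dimension at most `k − 2`. Then
`ρ(V) = k − 1` for `V ∈ 𝒮` and `ρ(V) = min{dim V, k}` otherwise defines a `q`-matroid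
on `𝔽_q^n`. -/
theorem paving_qMatroid_rank_function
    {F : Type} [Field F] [Fintype F] {n k : ℕ}
    (hk1 : 1 ≤ k) (hkn : k ≤ n)
    (𝒮 : Set (Submodule F (Fin n → F)))
    (h𝒮dim : ∀ V ∈ 𝒮, finrank F V = k)
    (h𝒮int : ∀ V ∈ 𝒮, ∀ W ∈ 𝒮, V ≠ W → ((finrank F ↥(V ⊓ W)) : ℤ) ≤ (k : ℤ) - 2)
    (ρ : Submodule F (Fin n → F) → ℕ)
    (hρ𝒮 : ∀ V ∈ 𝒮, ρ V = k - 1)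
    (hρ : ∀ (V : Submodule F (Fin n → F)), V ∉ 𝒮 → ρ V = min (finrank F V) k) :
    (∀ V : Submodule F (Fin n → F), ρ V ≤ finrank F V) ∧
    (∀ V W : Submodule F (Fin n → F), V ≤ W → ρ V ≤ ρ W) ∧
    (∀ V W : Submodule F (Fin n → F), ρ (V ⊔ W) + ρ (V ⊓ W) ≤ ρ V + ρ W) :=
  paving_qMatroid_rank_function_general 𝒮 h𝒮dim h𝒮int ρ hρ𝒮 hρ
end
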